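/- arXiv:1306.0707 — 5 statements merged into one kernel-verified Lean document; each statement's English description precedes it below -/
import Mathlib

section
/- Let (u₁ᵏ)ₖ and (u₂ᵏ)ₖ be sequences of functions on a finite grid of points indexed by {0,…,N}², defined by: u₁⁰ = u₂⁰ = 0 at interior points and equal to nonnegative boundary data φ₁, φ₂ at boundary points with φ₁·φ₂ = 0; and for each interior point p, u₁^{k+1}(p) = max(-f₁(p)h²/4 + ū₁ᵏ(p) - ū₂ᵏ(p), 0) and u₂^{k+1}(p) = max(-f₂(p)h²/4 + ū₂ᵏ(p) - ū₁ᵏ(p), 0), where ūᵏ(p) denotes the average of u over the four grid neighbors of p, and f₁, f₂ ≥ 0. Then for every k ≥ 0 and every grid point p, u₁ᵏ(p) · u₂ᵏ(p) = 0. -/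
/-- Membership in the grid `{0,…,N}²`. -/
def inGrid (N : ℕ) (p : ℤ × ℤ) : Prop :=
  0 ≤ p.1 ∧ p.1 ≤ N ∧ 0 ≤ p.2 ∧ p.2 ≤ N

/-- Interior grid points. -/
def interiorPt (N : ℕ) (p : ℤ × ℤ) : Prop :=
  0 < p.1 ∧ p.1 < N ∧ 0 < p.2 ∧ p.2 < N

/-- Boundary grid points. -/
def boundaryPt (N : ℕ) (p : ℤ × ℤ) : Prop :=
  inGrid N p ∧ ¬ interiorPt N p

/-- Average over the four grid neighbours. -/
noncomputable def nbAvg (u : ℤ × ℤ → ℝ) (p : ℤ × ℤ) : ℝ :=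
  (u (p.1 - 1, p.2) + u (p.1 + 1, p.2) + u (p.1, p.2 - 1) + u (p.1, p.2 + 1)) / 4

theorem max_zero_mul_max_zero_of_add_nonpos {α : Type*} [Ring α] [LinearOrder α]
    [IsOrderedRing α] {a b : α} (hab : a + b ≤ 0) : max a 0 * max b 0 = 0 := by
  rcases le_total a 0 with ha | ha
  · rw [max_eq_right ha, zero_mul]
  · rw [max_eq_right (le_of_add_le_of_nonneg_right hab ha), mul_zero]

theorem stmt_1_general (N : ℕ) (h : ℝ)
    (f₁ f₂ : ℤ × ℤ → ℝ) (hf₁ : ∀ p, 0 ≤ f₁ p) (hf₂ : ∀ p, 0 ≤ f₂ p)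
    (φ₁ φ₂ : ℤ × ℤ → ℝ)
    (hφ : ∀ p, φ₁ p * φ₂ p = 0)
    (u₁ u₂ : ℕ → ℤ × ℤ → ℝ)
    (hinit : ∀ p, interiorPt N p → u₁ 0 p = 0 ∧ u₂ 0 p = 0)
    (hbdry : ∀ k p, boundaryPt N p → u₁ k p = φ₁ p ∧ u₂ k p = φ₂ p)
    (hstep₁ : ∀ k p, interiorPt N p →
      u₁ (k + 1) p = max (-(f₁ p) * h ^ 2 / 4 + nbAvg (u₁ k) p - nbAvg (u₂ k) p) 0)
    (hstep₂ : ∀ k p, interiorPt N p →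
      u₂ (k + 1) p = max (-(f₂ p) * h ^ 2 / 4 + nbAvg (u₂ k) p - nbAvg (u₁ k) p) 0) :
    ∀ k p, inGrid N p → u₁ k p * u₂ k p = 0 := by
  intro k p hp
  by_cases hint : interiorPt N p
  · cases k with
    | zero =>
      obtain ⟨h₁, h₂⟩ := hinit p hint
      rw [h₁, h₂, mul_zero]
    | succ k =>
      rw [hstep₁ k p hint, hstep₂ k p hint]
      apply max_zero_mul_max_zero_of_add_nonpos
      -- The neighbour averages cancel, leaving `-(f₁ p + f₂ p) * h ^ 2 / 4 ≤ 0`.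
      have hsource : 0 ≤ (f₁ p + f₂ p) * h ^ 2 :=
        mul_nonneg (add_nonneg (hf₁ p) (hf₂ p)) (sq_nonneg h)
      linarith
  · obtain ⟨h₁, h₂⟩ := hbdry k p ⟨hp, hint⟩
    rw [h₁, h₂, hφ p]

theorem stmt_1 (N : ℕ) (hN : 2 ≤ N) (h : ℝ) (hh : 0 < h)
    (f₁ f₂ : ℤ × ℤ → ℝ) (hf₁ : ∀ p, 0 ≤ f₁ p) (hf₂ : ∀ p, 0 ≤ f₂ p)
    (φ₁ φ₂ : ℤ × ℤ → ℝ) (hφ₁ : ∀ p, 0 ≤ φ₁ p) (hφ₂ : ∀ p, 0 ≤ φ₂ p)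
    (hφ : ∀ p, φ₁ p * φ₂ p = 0)
    (u₁ u₂ : ℕ → ℤ × ℤ → ℝ)
    (hinit : ∀ p, interiorPt N p → u₁ 0 p = 0 ∧ u₂ 0 p = 0)
    (hbdry : ∀ k p, boundaryPt N p → u₁ k p = φ₁ p ∧ u₂ k p = φ₂ p)
    (hstep₁ : ∀ k p, interiorPt N p →
      u₁ (k + 1) p = max (-(f₁ p) * h ^ 2 / 4 + nbAvg (u₁ k) p - nbAvg (u₂ k) p) 0)
    (hstep₂ : ∀ k p, interiorPt N p →
      u₂ (k + 1) p = max (-(f₂ p) * h ^ 2 / 4 + nbAvg (u₂ k) p - nbAvg (u₁ k) p) 0) :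
    ∀ k p, inGrid N p → u₁ k p * u₂ k p = 0 :=
  stmt_1_general N h f₁ f₂ hf₁ hf₂ φ₁ φ₂ hφ u₁ u₂ hinit hbdry hstep₁ hstep₂
end

section
/- Under the iterative segregation scheme with f₁, f₂ ≥ 0 and nonnegative boundary data φ₁, φ₂, for every k ≥ 0 and every grid point p one has 0 ≤ u₁ᵏ(p) ≤ max_{q ∈ ∂𝒩} φ₁(q) and 0 ≤ u₂ᵏ(p) ≤ max_{q ∈ ∂𝒩} φ₂(q). -/
/-!
Each iterate stays in the box `[0, max φ₁] × [0, max φ₂]`. On the boundary this is the data. At an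
interior point the new value is a maximum with `0`, hence nonnegative, and it is at most the
neighbour average of the same component at the previous step, because `f ≥ 0` and the other
component's neighbour average is nonnegative; by induction that average is at most `max φ`.
-/

open Set

theorem boundaryPt_zero (N : ℕ) : boundaryPt N (0, 0) :=
  ⟨⟨le_rfl, by positivity, le_rfl, by positivity⟩, fun h => lt_irrefl _ h.1⟩

theorem finite_setOf_boundaryPt (N : ℕ) : {q | boundaryPt N q}.Finite :=
  (finite_Icc ((0 : ℤ), (0 : ℤ)) ((N : ℤ), (N : ℤ))).subset
    fun _ ⟨⟨h₁, h₂, h₃, h₄⟩, _⟩ => ⟨⟨h₁, h₃⟩, ⟨h₂, h₄⟩⟩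

theorem forall_inGrid_of_boundaryPt_of_interiorPt {N : ℕ} {P : ℤ × ℤ → Prop}
    (hb : ∀ p, boundaryPt N p → P p) (hi : ∀ p, interiorPt N p → P p) :
    ∀ p, inGrid N p → P p :=
  fun p hp => (em (interiorPt N p)).elim (hi p) fun hip => hb p ⟨hp, hip⟩

section BoundaryMax

variable {N : ℕ} {φ : ℤ × ℤ → ℝ}

theorem mem_Icc_sSup_image_boundaryPt (hφ : ∀ p, 0 ≤ φ p) {p : ℤ × ℤ} (hp : boundaryPt N p) :
    φ p ∈ Icc 0 (sSup (φ '' {q | boundaryPt N q})) :=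
  ⟨hφ p, le_csSup ((finite_setOf_boundaryPt N).image φ).bddAbove ⟨p, hp, rfl⟩⟩

theorem sSup_image_boundaryPt_nonneg (hφ : ∀ p, 0 ≤ φ p) :
    0 ≤ sSup (φ '' {q | boundaryPt N q}) :=
  let h := mem_Icc_sSup_image_boundaryPt hφ (boundaryPt_zero N)
  h.1.trans h.2

end BoundaryMax

section NeighbourAverage

variable {N : ℕ} {u v : ℤ × ℤ → ℝ} {p : ℤ × ℤ}

theorem nbAvg_const (c : ℝ) : nbAvg (fun _ => c) p = c := by
  simp only [nbAvg]
  ring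

theorem nbAvg_mono (huv : ∀ q, inGrid N q → u q ≤ v q) (hp : interiorPt N p) :
    nbAvg u p ≤ nbAvg v p := by
  obtain ⟨h₁, h₂, h₃, h₄⟩ := hp
  have := huv (p.1 - 1, p.2) ⟨by omega, by omega, by omega, by omega⟩
  have := huv (p.1 + 1, p.2) ⟨by omega, by omega, by omega, by omega⟩
  have := huv (p.1, p.2 - 1) ⟨by omega, by omega, by omega, by omega⟩
  have := huv (p.1, p.2 + 1) ⟨by omega, by omega, by omega, by omega⟩
  simp only [nbAvg]
  linarith

theorem nbAvg_nonneg (hu : ∀ q, inGrid N q → 0 ≤ u q) (hp : interiorPt N p) : 0 ≤ nbAvg u p :=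
  nbAvg_const (p := p) 0 ▸ nbAvg_mono hu hp

theorem nbAvg_le {M : ℝ} (hu : ∀ q, inGrid N q → u q ≤ M) (hp : interiorPt N p) :
    nbAvg u p ≤ M :=
  nbAvg_const (p := p) M ▸ nbAvg_mono hu hp

end NeighbourAverage

theorem segregationStep_mem_Icc {N : ℕ} {M h : ℝ} {f u w : ℤ × ℤ → ℝ} (hM : 0 ≤ M)
    (hf : ∀ p, 0 ≤ f p) (hu : ∀ q, inGrid N q → u q ∈ Icc 0 M) (hw : ∀ q, inGrid N q → 0 ≤ w q)
    {p : ℤ × ℤ} (hp : interiorPt N p) :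
    max (-(f p) * h ^ 2 / 4 + nbAvg u p - nbAvg w p) 0 ∈ Icc 0 M := by
  have hfh : 0 ≤ f p * h ^ 2 / 4 := by have := hf p; positivity
  have hu_le : nbAvg u p ≤ M := nbAvg_le (fun q hq => (hu q hq).2) hp
  have hw_nonneg : 0 ≤ nbAvg w p := nbAvg_nonneg hw hp
  exact ⟨le_max_right _ _, max_le (by linarith) hM⟩

theorem stmt_4_general (N : ℕ) (h : ℝ)
    (f₁ f₂ : ℤ × ℤ → ℝ) (hf₁ : ∀ p, 0 ≤ f₁ p) (hf₂ : ∀ p, 0 ≤ f₂ p)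
    (φ₁ φ₂ : ℤ × ℤ → ℝ) (hφ₁ : ∀ p, 0 ≤ φ₁ p) (hφ₂ : ∀ p, 0 ≤ φ₂ p)
    (u₁ u₂ : ℕ → ℤ × ℤ → ℝ)
    (hinit : ∀ p, interiorPt N p → u₁ 0 p = 0 ∧ u₂ 0 p = 0)
    (hbdry : ∀ k p, boundaryPt N p → u₁ k p = φ₁ p ∧ u₂ k p = φ₂ p)
    (hstep₁ : ∀ k p, interiorPt N p →
      u₁ (k + 1) p = max (-(f₁ p) * h ^ 2 / 4 + nbAvg (u₁ k) p - nbAvg (u₂ k) p) 0)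
    (hstep₂ : ∀ k p, interiorPt N p →
      u₂ (k + 1) p = max (-(f₂ p) * h ^ 2 / 4 + nbAvg (u₂ k) p - nbAvg (u₁ k) p) 0) :
    ∀ k p, inGrid N p →
      (0 ≤ u₁ k p ∧ u₁ k p ≤ sSup (φ₁ '' {q | boundaryPt N q})) ∧
      (0 ≤ u₂ k p ∧ u₂ k p ≤ sSup (φ₂ '' {q | boundaryPt N q})) := by
  have hM₁ := sSup_image_boundaryPt_nonneg (N := N) hφ₁
  have hM₂ := sSup_image_boundaryPt_nonneg (N := N) hφ₂
  have on_boundary : ∀ k p, boundaryPt N p →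
      u₁ k p ∈ Icc 0 (sSup (φ₁ '' {q | boundaryPt N q})) ∧
      u₂ k p ∈ Icc 0 (sSup (φ₂ '' {q | boundaryPt N q})) := fun k p hp => by
    rw [(hbdry k p hp).1, (hbdry k p hp).2]
    exact ⟨mem_Icc_sSup_image_boundaryPt hφ₁ hp, mem_Icc_sSup_image_boundaryPt hφ₂ hp⟩
  intro k
  induction k with
  | zero =>
    refine forall_inGrid_of_boundaryPt_of_interiorPt (on_boundary 0) fun p hp => ?_
    rw [(hinit p hp).1, (hinit p hp).2]
    exact ⟨⟨le_rfl, hM₁⟩, ⟨le_rfl, hM₂⟩⟩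
  | succ k ih =>
    refine forall_inGrid_of_boundaryPt_of_interiorPt (on_boundary (k + 1)) fun p hp => ?_
    rw [hstep₁ k p hp, hstep₂ k p hp]
    exact ⟨segregationStep_mem_Icc hM₁ hf₁ (fun q hq => (ih q hq).1) (fun q hq => (ih q hq).2.1) hp,
      segregationStep_mem_Icc hM₂ hf₂ (fun q hq => (ih q hq).2) (fun q hq => (ih q hq).1.1) hp⟩

theorem stmt_4 (N : ℕ) (hN : 2 ≤ N) (h : ℝ) (hh : 0 < h)
    (f₁ f₂ : ℤ × ℤ → ℝ) (hf₁ : ∀ p, 0 ≤ f₁ p) (hf₂ : ∀ p, 0 ≤ f₂ p)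
    (φ₁ φ₂ : ℤ × ℤ → ℝ) (hφ₁ : ∀ p, 0 ≤ φ₁ p) (hφ₂ : ∀ p, 0 ≤ φ₂ p)
    (hφ : ∀ p, φ₁ p * φ₂ p = 0)
    (u₁ u₂ : ℕ → ℤ × ℤ → ℝ)
    (hinit : ∀ p, interiorPt N p → u₁ 0 p = 0 ∧ u₂ 0 p = 0)
    (hbdry : ∀ k p, boundaryPt N p → u₁ k p = φ₁ p ∧ u₂ k p = φ₂ p)
    (hstep₁ : ∀ k p, interiorPt N p →
      u₁ (k + 1) p = max (-(f₁ p) * h ^ 2 / 4 + nbAvg (u₁ k) p - nbAvg (u₂ k) p) 0)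
    (hstep₂ : ∀ k p, interiorPt N p →
      u₂ (k + 1) p = max (-(f₂ p) * h ^ 2 / 4 + nbAvg (u₂ k) p - nbAvg (u₁ k) p) 0) :
    ∀ k p, inGrid N p →
      (0 ≤ u₁ k p ∧ u₁ k p ≤ sSup (φ₁ '' {q | boundaryPt N q})) ∧
      (0 ≤ u₂ k p ∧ u₂ k p ≤ sSup (φ₂ '' {q | boundaryPt N q})) :=
  stmt_4_general N h f₁ f₂ hf₁ hf₂ φ₁ φ₂ hφ₁ hφ₂ u₁ u₂ hinit hbdry hstep₁ hstep₂
end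

section
/- In the one-dimensional segregation algorithm, the sequence vᵏ = (u₁ᵏ(x₁) - u₂ᵏ(x₁), …, u₁ᵏ(x_{N-1}) - u₂ᵏ(x_{N-1})) converges in ℝ^{N-1} as k → ∞. -/
noncomputable def avg1 (u : ℕ → ℝ) (i : ℕ) : ℝ := (u (i - 1) + u (i + 1)) / 2

/-!
Write `w = u₁ - u₂` and `cⱼ = fⱼ h² / 2`. The scheme reads `wᵏ⁺¹(xᵢ) = T(w̄ᵏ(xᵢ))` with
`T a = max (a - c₁) 0 - max (-a - c₂) 0`; as `c₁, c₂ ≥ 0` the two terms are never both active,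
so `T` is 1-Lipschitz. Hence the increments `Eᵏ = |wᵏ⁺¹ - wᵏ|` vanish on the boundary and satisfy
`Eᵏ⁺¹ ≤ Ēᵏ` inside: they are subsolutions of the discrete heat iteration with Dirichlet data.
Comparing with the eigenvector `sin (π i / N)` of the averaging operator gives
`Eᵏ(xᵢ) ≤ C cos (π / N) ^ k`, so each `wᵏ(xᵢ)` is a Cauchy sequence.
-/

open Filter Real

noncomputable def softThreshold (c₁ c₂ a : ℝ) : ℝ := max (a - c₁) 0 - max (-a - c₂) 0

theorem lipschitzWith_one_softThreshold {c₁ c₂ : ℝ} (hc₁ : 0 ≤ c₁) (hc₂ : 0 ≤ c₂) :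
    LipschitzWith 1 (softThreshold c₁ c₂) := by
  refine LipschitzWith.of_dist_le_mul fun a b => ?_
  simp only [Real.dist_eq, NNReal.coe_one, one_mul, softThreshold]
  rcases max_cases (a - c₁) 0 with ⟨e₁, _⟩ | ⟨e₁, _⟩ <;>
  rcases max_cases (b - c₁) 0 with ⟨e₂, _⟩ | ⟨e₂, _⟩ <;>
  rcases max_cases (-a - c₂) 0 with ⟨e₃, _⟩ | ⟨e₃, _⟩ <;>
  rcases max_cases (-b - c₂) 0 with ⟨e₄, _⟩ | ⟨e₄, _⟩ <;>
  rw [e₁, e₂, e₃, e₄, abs_sub_le_iff] <;>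
  constructor <;> linarith [le_abs_self (a - b), neg_abs_le (a - b)]

theorem avg1_sub_avg1 (u v : ℕ → ℝ) (i : ℕ) : avg1 u i - avg1 v i = avg1 (u - v) i := by
  simp only [avg1, Pi.sub_apply]
  ring

theorem avg1_le_avg1 {u v : ℕ → ℝ} {i : ℕ} (h₁ : u (i - 1) ≤ v (i - 1))
    (h₂ : u (i + 1) ≤ v (i + 1)) : avg1 u i ≤ avg1 v i := by
  unfold avg1
  linarith

theorem avg1_const_mul (c : ℝ) (u : ℕ → ℝ) (i : ℕ) :
    avg1 (fun j => c * u j) i = c * avg1 u i := by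
  unfold avg1
  ring

theorem abs_avg1_sub_avg1_le (u v : ℕ → ℝ) (i : ℕ) :
    |avg1 u i - avg1 v i| ≤ avg1 (fun j => |u j - v j|) i := by
  rw [avg1_sub_avg1]
  unfold avg1
  rw [abs_div, abs_two]
  gcongr
  exact abs_add_le _ _

theorem avg1_sin_mul (θ : ℝ) {i : ℕ} (hi : 0 < i) :
    avg1 (fun j => sin (θ * j)) i = cos θ * sin (θ * i) := by
  simp only [avg1, Nat.cast_sub hi, Nat.cast_add, Nat.cast_one, mul_sub, mul_add, mul_one,
    sin_sub, sin_add]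
  ring

theorem le_mul_pow_mul_of_le_avg1 {N : ℕ} {E : ℕ → ℕ → ℝ} {s : ℕ → ℝ} {ρ C : ℝ}
    (hs : ∀ i, 0 < i → i < N → avg1 s i = ρ * s i) (hs0 : s 0 = 0) (hsN : s N = 0)
    (hE0 : ∀ k, E k 0 ≤ 0) (hEN : ∀ k, E k N ≤ 0)
    (hrec : ∀ k i, 0 < i → i < N → E (k + 1) i ≤ avg1 (E k) i)
    (hinit : ∀ i, 0 < i → i < N → E 0 i ≤ C * s i) :
    ∀ k i, i ≤ N → E k i ≤ C * ρ ^ k * s i := by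
  have extend : ∀ k, (∀ i, 0 < i → i < N → E k i ≤ C * ρ ^ k * s i) →
      ∀ i, i ≤ N → E k i ≤ C * ρ ^ k * s i := by
    intro k hk i hiN
    rcases Nat.eq_zero_or_pos i with rfl | hi
    · simpa [hs0] using hE0 k
    rcases hiN.lt_or_eq with hiN | rfl
    · exact hk i hi hiN
    · simpa [hsN] using hEN k
  intro k
  induction k with
  | zero => exact extend 0 (by simpa using hinit)
  | succ k ih =>
    refine extend (k + 1) fun i hi hiN => ?_
    calc E (k + 1) i ≤ avg1 (E k) i := hrec k i hi hiN
      _ ≤ avg1 (fun j => C * ρ ^ k * s j) i := avg1_le_avg1 (ih _ (by omega)) (ih _ (by omega))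
      _ = C * ρ ^ (k + 1) * s i := by rw [avg1_const_mul, hs i hi hiN]; ring

theorem exists_le_mul_pow_of_le_avg1 {N : ℕ} (hN : 0 < N) {E : ℕ → ℕ → ℝ}
    (hE0 : ∀ k, E k 0 ≤ 0) (hEN : ∀ k, E k N ≤ 0)
    (hrec : ∀ k i, 0 < i → i < N → E (k + 1) i ≤ avg1 (E k) i) :
    ∃ ρ < 1, ∃ C : ℕ → ℝ, ∀ k i, 0 < i → i < N → E k i ≤ C i * ρ ^ k := by
  set θ := π / N
  have hθ : 0 < θ := by positivity
  have hθπ : θ ≤ π := div_le_self pi_pos.le (by exact_mod_cast hN)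
  have hNθ : θ * N = π := div_mul_cancel₀ π (by positivity)
  have hs : ∀ i, 0 < i → i < N → 0 < sin (θ * i) := fun i hi hiN =>
    sin_pos_of_pos_of_lt_pi (by positivity) (by rw [← hNθ]; gcongr)
  obtain ⟨C, hC⟩ := (Finset.image (fun i => E 0 i / sin (θ * i)) (Finset.Ioo 0 N)).exists_le
  have hinit : ∀ i, 0 < i → i < N → E 0 i ≤ C * sin (θ * i) := fun i hi hiN =>
    (div_le_iff₀ (hs i hi hiN)).1 (hC _ (Finset.mem_image_of_mem _ (Finset.mem_Ioo.2 ⟨hi, hiN⟩)))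
  have hcomp := le_mul_pow_mul_of_le_avg1 (fun i hi _ => avg1_sin_mul θ hi)
    (by simp) (by rw [hNθ, sin_pi]) hE0 hEN hrec hinit
  refine ⟨cos θ, ?_, fun i => C * sin (θ * i), fun k i _ hiN => ?_⟩
  · simpa using cos_lt_cos_of_nonneg_of_le_pi le_rfl hθπ hθ
  · linarith [hcomp k i hiN.le]

theorem cauchySeq_of_eq_comp_avg1 {N : ℕ} {w : ℕ → ℕ → ℝ} {T : ℕ → ℝ → ℝ}
    (hT : ∀ i, LipschitzWith 1 (T i))
    (hw : ∀ k i, 0 < i → i < N → w (k + 1) i = T i (avg1 (w k) i))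
    (hw0 : ∀ k, w (k + 1) 0 = w k 0) (hwN : ∀ k, w (k + 1) N = w k N)
    {i : ℕ} (hi : 0 < i) (hiN : i < N) : CauchySeq fun k => w k i := by
  set E : ℕ → ℕ → ℝ := fun k j => |w (k + 1) j - w k j|
  have hrec : ∀ k j, 0 < j → j < N → E (k + 1) j ≤ avg1 (E k) j := by
    intro k j hj hjN
    calc E (k + 1) j = |T j (avg1 (w (k + 1)) j) - T j (avg1 (w k) j)| := by
          simp only [E, hw _ j hj hjN]
      _ ≤ |avg1 (w (k + 1)) j - avg1 (w k) j| := by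
          simpa [Real.dist_eq] using (hT j).dist_le_mul (avg1 (w (k + 1)) j) (avg1 (w k) j)
      _ ≤ avg1 (E k) j := abs_avg1_sub_avg1_le _ _ _
  obtain ⟨ρ, hρ, C, hC⟩ := exists_le_mul_pow_of_le_avg1 (hi.trans hiN)
    (by simp [E, hw0]) (by simp [E, hwN]) hrec
  refine cauchySeq_of_le_geometric ρ (C i) hρ fun k => ?_
  rw [dist_comm, Real.dist_eq]
  exact hC k i hi hiN

theorem stmt_12_general (N : ℕ) (h : ℝ)
    (f₁ f₂ : ℕ → ℝ) (hf₁ : ∀ i, 0 ≤ f₁ i) (hf₂ : ∀ i, 0 ≤ f₂ i)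
    (φ₁ φ₂ : ℕ → ℝ)
    (u₁ u₂ : ℕ → ℕ → ℝ)
    (hbdry : ∀ k, u₁ k 0 = φ₁ 0 ∧ u₂ k 0 = φ₂ 0 ∧ u₁ k N = φ₁ N ∧ u₂ k N = φ₂ N)
    (hstep₁ : ∀ k i, 1 ≤ i → i ≤ N - 1 →
      u₁ (k + 1) i = max (-(f₁ i) * h ^ 2 / 2 + avg1 (u₁ k) i - avg1 (u₂ k) i) 0)
    (hstep₂ : ∀ k i, 1 ≤ i → i ≤ N - 1 →
      u₂ (k + 1) i = max (-(f₂ i) * h ^ 2 / 2 + avg1 (u₂ k) i - avg1 (u₁ k) i) 0) :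
    ∃ L : ℕ → ℝ, ∀ i, 1 ≤ i → i ≤ N - 1 →
      Filter.Tendsto (fun k => u₁ k i - u₂ k i) Filter.atTop (nhds (L i)) := by
  set w : ℕ → ℕ → ℝ := fun k i => u₁ k i - u₂ k i
  have hw : ∀ k i, 0 < i → i < N →
      w (k + 1) i = softThreshold (f₁ i * h ^ 2 / 2) (f₂ i * h ^ 2 / 2) (avg1 (w k) i) := by
    intro k i hi hiN
    have hsub : avg1 (w k) i = avg1 (u₁ k) i - avg1 (u₂ k) i := (avg1_sub_avg1 _ _ _).symm
    simp only [w, hstep₁ k i hi (by omega), hstep₂ k i hi (by omega), softThreshold, hsub]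
    ring_nf
  have hT : ∀ i, LipschitzWith 1 (softThreshold (f₁ i * h ^ 2 / 2) (f₂ i * h ^ 2 / 2)) :=
    fun i => lipschitzWith_one_softThreshold (by have := hf₁ i; positivity)
      (by have := hf₂ i; positivity)
  refine ⟨fun i => limUnder atTop fun k => w k i, fun i hi hiN => ?_⟩
  refine (cauchySeq_of_eq_comp_avg1 hT hw (fun k => ?_) (fun k => ?_) hi (by omega)).tendsto_limUnder
  · simp only [w, (hbdry (k + 1)).1, (hbdry (k + 1)).2.1, (hbdry k).1, (hbdry k).2.1]
  · simp only [w, (hbdry (k + 1)).2.2.1, (hbdry (k + 1)).2.2.2, (hbdry k).2.2.1, (hbdry k).2.2.2]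

theorem stmt_12 (N : ℕ) (hN : 2 ≤ N) (h : ℝ) (hh : 0 < h)
    (f₁ f₂ : ℕ → ℝ) (hf₁ : ∀ i, 0 ≤ f₁ i) (hf₂ : ∀ i, 0 ≤ f₂ i)
    (φ₁ φ₂ : ℕ → ℝ) (hφ₁ : ∀ i, 0 ≤ φ₁ i) (hφ₂ : ∀ i, 0 ≤ φ₂ i)
    (hφ0 : φ₁ 0 * φ₂ 0 = 0) (hφN : φ₁ N * φ₂ N = 0)
    (u₁ u₂ : ℕ → ℕ → ℝ)
    (hbdry : ∀ k, u₁ k 0 = φ₁ 0 ∧ u₂ k 0 = φ₂ 0 ∧ u₁ k N = φ₁ N ∧ u₂ k N = φ₂ N)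
    (hinit : ∀ i, 1 ≤ i → i ≤ N - 1 → u₁ 0 i = 0 ∧ u₂ 0 i = 0)
    (hstep₁ : ∀ k i, 1 ≤ i → i ≤ N - 1 →
      u₁ (k + 1) i = max (-(f₁ i) * h ^ 2 / 2 + avg1 (u₁ k) i - avg1 (u₂ k) i) 0)
    (hstep₂ : ∀ k i, 1 ≤ i → i ≤ N - 1 →
      u₂ (k + 1) i = max (-(f₂ i) * h ^ 2 / 2 + avg1 (u₂ k) i - avg1 (u₁ k) i) 0) :
    ∃ L : ℕ → ℝ, ∀ i, 1 ≤ i → i ≤ N - 1 →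
      Filter.Tendsto (fun k => u₁ k i - u₂ k i) Filter.atTop (nhds (L i)) :=
  stmt_12_general N h f₁ f₂ hf₁ hf₂ φ₁ φ₂ u₁ u₂ hbdry hstep₁ hstep₂
end

section
/- At a fixed point of the one-dimensional scheme: if u₁(xᵢ) > 0 (so u₂(xᵢ) = 0 and v(xᵢ) = u₁(xᵢ)), then the discrete Laplacian satisfies Δ_h v(xᵢ) = (v(x_{i-1}) - 2v(xᵢ) + v(x_{i+1}))/h² = f₁(xᵢ). -/
theorem eq_of_eq_max_of_lt {α : Type*} [LinearOrder α] {x a b : α} (hx : x = max a b)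
    (hb : b < x) : x = a := by
  have hba : b < a := by
    rw [hx, lt_max_iff] at hb
    exact hb.resolve_right (lt_irrefl b)
  rw [hx, max_eq_left hba.le]

theorem stmt_13_general (h : ℝ) (hh : 0 < h) (f₁ u₁ u₂ : ℕ → ℝ) (i : ℕ)
    (hfix₁ : u₁ i = max (-(f₁ i) * h ^ 2 / 2 + avg1 u₁ i - avg1 u₂ i) 0)
    (hprod : u₁ i * u₂ i = 0)
    (hpos : 0 < u₁ i) :
    ((u₁ (i - 1) - u₂ (i - 1)) - 2 * (u₁ i - u₂ i) + (u₁ (i + 1) - u₂ (i + 1))) / h ^ 2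
      = f₁ i := by
  have hu₂ : u₂ i = 0 := (mul_eq_zero.mp hprod).resolve_left hpos.ne'
  have hactive := eq_of_eq_max_of_lt hfix₁ hpos
  rw [avg1, avg1] at hactive
  rw [div_eq_iff (by positivity)]
  linarith

theorem stmt_13 (h : ℝ) (hh : 0 < h) (f₁ f₂ u₁ u₂ : ℕ → ℝ) (i : ℕ) (hi : 1 ≤ i)
    (hfix₁ : u₁ i = max (-(f₁ i) * h ^ 2 / 2 + avg1 u₁ i - avg1 u₂ i) 0)
    (hfix₂ : u₂ i = max (-(f₂ i) * h ^ 2 / 2 + avg1 u₂ i - avg1 u₁ i) 0)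
    (hprod : u₁ i * u₂ i = 0)
    (hpos : 0 < u₁ i) :
    ((u₁ (i - 1) - u₂ (i - 1)) - 2 * (u₁ i - u₂ i) + (u₁ (i + 1) - u₂ (i + 1))) / h ^ 2
      = f₁ i :=
  stmt_13_general h hh f₁ u₁ u₂ i hfix₁ hprod hpos
end

section
/- At a fixed point of the one-dimensional scheme: if u₁(xᵢ) = u₂(xᵢ) = 0, then -f₂(xᵢ) ≤ Δ_h v(xᵢ) ≤ f₁(xᵢ), where v = u₁ - u₂ and Δ_h v(xᵢ) = (v(x_{i-1}) - 2v(xᵢ) + v(x_{i+1}))/h². -/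
/-- The second difference quotient `Δ_h v(xᵢ)` on the grid `xᵢ = i h`. -/
noncomputable def discreteLaplacian (h : ℝ) (v : ℕ → ℝ) (i : ℕ) : ℝ :=
  (v (i - 1) - 2 * v i + v (i + 1)) / h ^ 2

theorem discreteLaplacian_eq_avg1 (h : ℝ) (v : ℕ → ℝ) (i : ℕ) :
    discreteLaplacian h v i = 2 * (avg1 v i - v i) / h ^ 2 := by
  unfold discreteLaplacian avg1
  ring

theorem avg1_sub (u w : ℕ → ℝ) (i : ℕ) : avg1 (u - w) i = avg1 u i - avg1 w i := by
  simp only [avg1, Pi.sub_apply]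
  ring

theorem two_mul_sub_div_le_of_max_eq_zero {h f a b : ℝ} (hh : 0 < h)
    (hfix : max (-f * h ^ 2 / 2 + a - b) 0 = 0) : 2 * (a - b) / h ^ 2 ≤ f := by
  have hneg : -f * h ^ 2 / 2 + a - b ≤ 0 := max_eq_right_iff.mp hfix
  rw [div_le_iff₀ (by positivity)]
  linarith

theorem stmt_14_general (h : ℝ) (hh : 0 < h) (f₁ f₂ u₁ u₂ : ℕ → ℝ) (i : ℕ)
    (hfix₁ : u₁ i = max (-(f₁ i) * h ^ 2 / 2 + avg1 u₁ i - avg1 u₂ i) 0)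
    (hfix₂ : u₂ i = max (-(f₂ i) * h ^ 2 / 2 + avg1 u₂ i - avg1 u₁ i) 0)
    (h₁ : u₁ i = 0) (h₂ : u₂ i = 0) :
    -f₂ i ≤ ((u₁ (i - 1) - u₂ (i - 1)) - 2 * (u₁ i - u₂ i)
        + (u₁ (i + 1) - u₂ (i + 1))) / h ^ 2 ∧
    ((u₁ (i - 1) - u₂ (i - 1)) - 2 * (u₁ i - u₂ i)
        + (u₁ (i + 1) - u₂ (i + 1))) / h ^ 2 ≤ f₁ i := by
  have hf₁ := two_mul_sub_div_le_of_max_eq_zero hh (hfix₁.symm.trans h₁)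
  have hf₂ := two_mul_sub_div_le_of_max_eq_zero hh (hfix₂.symm.trans h₂)
  change -f₂ i ≤ discreteLaplacian h (u₁ - u₂) i ∧ discreteLaplacian h (u₁ - u₂) i ≤ f₁ i
  rw [discreteLaplacian_eq_avg1, avg1_sub, Pi.sub_apply, h₁, h₂, sub_zero, sub_zero]
  rw [← neg_sub, mul_neg, neg_div, neg_le] at hf₂
  exact ⟨hf₂, hf₁⟩

theorem stmt_14 (h : ℝ) (hh : 0 < h) (f₁ f₂ u₁ u₂ : ℕ → ℝ) (i : ℕ) (hi : 1 ≤ i)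
    (hfix₁ : u₁ i = max (-(f₁ i) * h ^ 2 / 2 + avg1 u₁ i - avg1 u₂ i) 0)
    (hfix₂ : u₂ i = max (-(f₂ i) * h ^ 2 / 2 + avg1 u₂ i - avg1 u₁ i) 0)
    (h₁ : u₁ i = 0) (h₂ : u₂ i = 0) :
    -f₂ i ≤ ((u₁ (i - 1) - u₂ (i - 1)) - 2 * (u₁ i - u₂ i)
        + (u₁ (i + 1) - u₂ (i + 1))) / h ^ 2 ∧
    ((u₁ (i - 1) - u₂ (i - 1)) - 2 * (u₁ i - u₂ i)
        + (u₁ (i + 1) - u₂ (i + 1))) / h ^ 2 ≤ f₁ i :=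
  stmt_14_general h hh f₁ f₂ u₁ u₂ i hfix₁ hfix₂ h₁ h₂
end
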